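/- arXiv:1801.01521 — 2 statements merged into one kernel-verified Lean document; each statement's English description precedes it below -/
import Mathlib

section
/- Let α, c > 0 and let r be an integer with 0 ≤ r < α. Let Z be a non-negative random variable with P(Z > t) = (c + o(1)) t^{-α} as t → ∞, and set h_r = E[Z^r] (which is finite), assumed positive. Let Λ_Z^{(r)} be the integer-valued random variable with distribution P(Λ_Z^{(r)} = k) = h_r^{-1} E[e^{-Z} Z^{k+r} / k!] for k = 0,1,2,.... Then P(Λ_Z^{(r)} > t) = (1 + o(1)) h_r^{-1} E[Z^r · 1{Z > t}] = (1 + o(1)) h_r^{-1} c · (α/(α − r)) · t^{r−α} as t → ∞. -/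
/-!
Conditionally on `Z = z`, `Λ` has the law of a Poisson variable of mean `z` tilted by `z ^ r`,
so `P(Λ > t) = h_r⁻¹ E[Z^r P(Po(Z) ≥ ⌊t⌋ + 1)]`. Chernoff bounds make `P(Po(z) ≥ ⌊t⌋ + 1)`
exponentially small in `t` when `z ≤ (1 - ε) t` and exponentially close to `1` when
`z ≥ (1 + ε) t`, which squeezes `h_r P(Λ > t)` between `E[Z^r; Z > (1 ± ε) t]` up to
exponentially small errors. By the layer-cake formula,
`E[Z^r; Z > t] = t^r P(Z > t) + r ∫_t^∞ s^{r-1} P(Z > s) ds ∼ c α / (α - r) t^{r-α}`,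
which is regularly varying, so letting `ε → 0` gives both asymptotics.
-/

open MeasureTheory ProbabilityTheory Filter Real Topology Finset Set
open scoped Nat

lemma Real.hasSum_pow_add_div_factorial (n : ℕ) (z : ℝ) :
    HasSum (fun j : ℕ => z ^ (j + n) / (j + n)!) (exp z - ∑ k ∈ range n, z ^ k / k !) := by
  refine (hasSum_nat_add_iff' n).mpr ?_
  rw [Real.exp_eq_exp_ℝ]
  exact NormedSpace.expSeries_div_hasSum_exp z

/-- `poissonTail n z` is `P(X ≥ n)` for `X` Poisson of mean `z`. -/
noncomputable def poissonTail (n : ℕ) (z : ℝ) : ℝ :=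
  1 - exp (-z) * ∑ k ∈ range n, z ^ k / k !

lemma poissonTail_eq (n : ℕ) (z : ℝ) :
    poissonTail n z = exp (-z) * (exp z - ∑ k ∈ range n, z ^ k / k !) := by
  rw [poissonTail, mul_sub, ← exp_add, neg_add_cancel, exp_zero]

@[simp]
lemma poissonTail_zero (z : ℝ) : poissonTail 0 z = 1 := by
  simp [poissonTail]

lemma hasSum_poissonTail (n : ℕ) (z : ℝ) :
    HasSum (fun j : ℕ => exp (-z) * z ^ (j + n) / (j + n)!) (poissonTail n z) := by
  rw [poissonTail_eq]
  simpa only [mul_div_assoc] using (hasSum_pow_add_div_factorial n z).mul_left (exp (-z))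

lemma poissonTail_nonneg {z : ℝ} (hz : 0 ≤ z) (n : ℕ) : 0 ≤ poissonTail n z := by
  rw [poissonTail_eq]
  exact mul_nonneg (exp_nonneg _) (sub_nonneg.mpr (sum_le_exp_of_nonneg hz n))

lemma poissonTail_le_one {z : ℝ} (hz : 0 ≤ z) (n : ℕ) : poissonTail n z ≤ 1 := by
  rw [poissonTail, sub_le_self_iff]
  exact mul_nonneg (exp_nonneg _) (sum_nonneg fun k _ => by positivity)

lemma measurable_poissonTail (n : ℕ) : Measurable (poissonTail n) := by
  unfold poissonTail
  fun_prop

lemma pow_eq_exp_mul_pow (z θ : ℝ) (m : ℕ) : z ^ m = exp (-(θ * m)) * (z * exp θ) ^ m := by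
  rw [mul_pow, ← exp_nat_mul, mul_left_comm, ← exp_add]
  ring_nf
  simp

lemma poissonTail_le_exp {θ z : ℝ} (hθ : 0 ≤ θ) (hz : 0 ≤ z) (n : ℕ) :
    poissonTail n z ≤ exp (z * (exp θ - 1) - θ * n) := by
  set w := z * exp θ
  have htilt : exp z - ∑ k ∈ range n, z ^ k / k !
      ≤ exp (-(θ * n)) * (exp w - ∑ k ∈ range n, w ^ k / k !) := by
    refine hasSum_le (fun j => ?_) (hasSum_pow_add_div_factorial n z)
      ((hasSum_pow_add_div_factorial n w).mul_left _)
    rw [pow_eq_exp_mul_pow z θ, mul_div_assoc]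
    gcongr
    nlinarith [mul_nonneg hθ (Nat.cast_nonneg (α := ℝ) j)]
  calc poissonTail n z ≤ exp (-z) * (exp (-(θ * n)) * exp w) := by
        rw [poissonTail_eq]
        gcongr
        exact htilt.trans (by gcongr; exact sub_le_self _ (sum_nonneg fun k _ => by positivity))
    _ = exp (z * (exp θ - 1) - θ * n) := by
        rw [← exp_add, ← exp_add]; congr 1; ring

lemma one_sub_poissonTail_le_exp {θ z : ℝ} (hθ : 0 ≤ θ) (hz : 0 ≤ z) (n : ℕ) :
    1 - poissonTail n z ≤ exp (θ * n + z * (exp (-θ) - 1)) := by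
  set w := z * exp (-θ)
  have htilt : ∑ k ∈ range n, z ^ k / k ! ≤ exp (θ * n) * ∑ k ∈ range n, w ^ k / k ! := by
    rw [mul_sum]
    refine sum_le_sum fun k hk => ?_
    rw [pow_eq_exp_mul_pow z (-θ), mul_div_assoc]
    gcongr
    have : (k : ℝ) ≤ n := by exact_mod_cast (mem_range.mp hk).le
    nlinarith
  calc 1 - poissonTail n z ≤ exp (-z) * (exp (θ * n) * exp w) := by
        rw [poissonTail, sub_sub_cancel]
        gcongr
        exact htilt.trans (by gcongr; exact sum_le_exp_of_nonneg (by positivity) n)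
    _ = exp (θ * n + z * (exp (-θ) - 1)) := by
        rw [← exp_add, ← exp_add]; congr 1; ring

lemma exists_poissonTail_le_exp_neg {ε : ℝ} (hε0 : 0 < ε) (hε1 : ε < 1) :
    ∃ δ > 0, ∀ (t z : ℝ) (n : ℕ), 0 ≤ z → z ≤ (1 - ε) * t → t ≤ n →
      poissonTail n z ≤ exp (-δ * t) := by
  have hlog := log_lt_sub_one_of_pos (x := 1 - ε) (by linarith) (by linarith)
  set θ := -log (1 - ε)
  have hθ : 0 ≤ θ := by linarith [log_nonpos (x := 1 - ε) (by linarith) (by linarith)]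
  have heθ : exp θ = (1 - ε)⁻¹ := by rw [exp_neg, exp_log (by linarith)]
  refine ⟨θ - ε, by linarith, fun t z n hz hzt htn => (poissonTail_le_exp hθ hz n).trans ?_⟩
  have hgain : z * (exp θ - 1) ≤ ε * t := by
    have h1 : 0 ≤ exp θ - 1 := by linarith [one_le_exp hθ]
    calc z * (exp θ - 1) ≤ (1 - ε) * t * (exp θ - 1) := by gcongr
      _ = ε * t := by
        rw [heθ]
        field_simp [show 1 - ε ≠ 0 by linarith]
        ring
  gcongr
  nlinarith [mul_le_mul_of_nonneg_left htn hθ]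

lemma exists_one_sub_poissonTail_le_exp_neg {ε : ℝ} (hε : 0 < ε) :
    ∃ δ > 0, ∀ (t z : ℝ) (n : ℕ), 0 ≤ t → (1 + ε) * t ≤ z → (n : ℝ) ≤ t + 1 →
      1 - poissonTail n z ≤ (1 + ε) * exp (-δ * t) := by
  have hlog := log_lt_sub_one_of_pos (x := 1 + ε) (by linarith) (by linarith)
  set θ := log (1 + ε) with hθ_def
  have hθ : 0 ≤ θ := log_nonneg (by linarith)
  have heθ : exp (-θ) = (1 + ε)⁻¹ := by rw [exp_neg, exp_log (by linarith)]
  refine ⟨ε - θ, by linarith, fun t z n ht hzt hnt => ?_⟩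
  have hz : 0 ≤ z := le_trans (by positivity) hzt
  have hloss : z * (exp (-θ) - 1) ≤ -(ε * t) := by
    have h1 : exp (-θ) - 1 ≤ 0 := by linarith [exp_le_one_iff.mpr (neg_nonpos.mpr hθ)]
    calc z * (exp (-θ) - 1) ≤ (1 + ε) * t * (exp (-θ) - 1) := mul_le_mul_of_nonpos_right hzt h1
      _ = -(ε * t) := by rw [heθ]; field_simp; ring
  calc 1 - poissonTail n z ≤ exp (θ * n + z * (exp (-θ) - 1)) := one_sub_poissonTail_le_exp hθ hz n
    _ ≤ exp (θ + -(ε - θ) * t) :=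
      exp_le_exp.mpr (by nlinarith [mul_le_mul_of_nonneg_left hnt hθ])
    _ = (1 + ε) * exp (-(ε - θ) * t) := by rw [exp_add, hθ_def, exp_log (by linarith)]

theorem tendsto_of_forall_eventually_squeeze {ι β γ : Type*} [TopologicalSpace γ] [LinearOrder γ]
    [OrderTopology γ] {p : Filter ι} [p.NeBot] {l : Filter β} {f : β → γ} {K : γ}
    {Lo Up : ι → γ} (hLo : Tendsto Lo p (𝓝 K)) (hUp : Tendsto Up p (𝓝 K))
    (h : ∀ᶠ i in p, ∃ lo up : β → γ, Tendsto lo l (𝓝 (Lo i)) ∧ Tendsto up l (𝓝 (Up i)) ∧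
      ∀ᶠ t in l, lo t ≤ f t ∧ f t ≤ up t) :
    Tendsto f l (𝓝 K) := by
  refine tendsto_order.mpr ⟨fun a ha => ?_, fun b hb => ?_⟩
  · obtain ⟨i, hi, lo, up, hlo, -, hle⟩ := ((hLo.eventually (lt_mem_nhds ha)).and h).exists
    filter_upwards [hlo.eventually (lt_mem_nhds hi), hle] with t h1 h2
    exact h1.trans_le h2.1
  · obtain ⟨i, hi, lo, up, -, hup, hle⟩ := ((hUp.eventually (gt_mem_nhds hb)).and h).exists
    filter_upwards [hup.eventually (gt_mem_nhds hi), hle] with t h1 h2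
    exact h2.2.trans_lt h1

lemma tendsto_comp_const_mul_mul_rpow {g : ℝ → ℝ} {β K a : ℝ}
    (hg : Tendsto (fun t => g t * t ^ β) atTop (𝓝 K)) (ha : 0 < a) :
    Tendsto (fun t => g (a * t) * t ^ β) atTop (𝓝 (K * a ^ (-β))) := by
  refine ((hg.comp (tendsto_id.const_mul_atTop ha)).mul_const (a ^ (-β))).congr' ?_
  filter_upwards [eventually_gt_atTop 0] with t ht
  simp only [Function.comp_apply, id_eq]
  rw [mul_rpow ha.le ht.le, rpow_neg ha.le]
  field_simp

lemma integral_Ioi_mul_rpow_mem_Icc {F : ℝ → ℝ} {α γ t a b : ℝ} (hγ : γ + 1 < α) (ht : 0 < t)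
    (hF : Measurable F) (hab : ∀ s, t < s → F s * s ^ α ∈ Icc a b) :
    (∫ s in Ioi t, F s * s ^ γ) * t ^ (α - γ - 1) ∈ Icc (a / (α - γ - 1)) (b / (α - γ - 1)) := by
  have he : γ - α < -1 := by linarith
  have hsplit : ∀ s ∈ Ioi t, F s * s ^ γ = F s * s ^ α * s ^ (γ - α) := fun s hs => by
    rw [mul_assoc, ← rpow_add (ht.trans hs), add_sub_cancel]
  have hpow : ∀ d : ℝ, (∫ s in Ioi t, d * s ^ (γ - α)) * t ^ (α - γ - 1) = d / (α - γ - 1) := by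
    intro d
    rw [integral_const_mul, integral_Ioi_rpow_of_lt he ht, show γ - α + 1 = -(α - γ - 1) by ring,
      rpow_neg ht.le]
    field_simp
  have hint : ∀ d, IntegrableOn (fun s => d * s ^ (γ - α)) (Ioi t) := fun d =>
    (integrableOn_Ioi_rpow_of_lt he ht).const_mul d
  have hFint : IntegrableOn (fun s => F s * s ^ γ) (Ioi t) := by
    refine (hint (|a| + |b|)).mono' (by fun_prop) ((ae_restrict_iff' measurableSet_Ioi).mpr
      (ae_of_all _ fun s hs => ?_))
    have hs0 := rpow_nonneg (ht.trans hs).le (γ - α)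
    rw [hsplit s hs, norm_mul, Real.norm_of_nonneg hs0]
    refine mul_le_mul_of_nonneg_right ?_ hs0
    obtain ⟨hlo, hhi⟩ := hab s hs
    rw [Real.norm_eq_abs, abs_le]
    constructor <;> linarith [neg_abs_le a, le_abs_self b, abs_nonneg a, abs_nonneg b]
  have hs : MeasurableSet (Ioi t) := measurableSet_Ioi
  have htβ : 0 ≤ t ^ (α - γ - 1) := rpow_nonneg ht.le _
  constructor
  · rw [← hpow]
    refine mul_le_mul_of_nonneg_right (setIntegral_mono_on (hint a) hFint hs fun s hs => ?_) htβ
    rw [hsplit s hs]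
    exact mul_le_mul_of_nonneg_right (hab s hs).1 (rpow_nonneg (ht.trans hs).le _)
  · rw [← hpow]
    refine mul_le_mul_of_nonneg_right (setIntegral_mono_on hFint (hint b) hs fun s hs => ?_) htβ
    rw [hsplit s hs]
    exact mul_le_mul_of_nonneg_right (hab s hs).2 (rpow_nonneg (ht.trans hs).le _)

theorem tendsto_integral_Ioi_mul_rpow {F : ℝ → ℝ} {α γ c : ℝ} (hγ : γ + 1 < α)
    (hF : Measurable F) (hFc : Tendsto (fun s => F s * s ^ α) atTop (𝓝 c)) :
    Tendsto (fun t => (∫ s in Ioi t, F s * s ^ γ) * t ^ (α - γ - 1)) atTop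
      (𝓝 (c / (α - γ - 1))) := by
  have hlim : ∀ σ : ℝ, Tendsto (fun ε => (c + σ * ε) / (α - γ - 1)) (𝓝[>] 0)
      (𝓝 (c / (α - γ - 1))) := fun σ =>
    tendsto_nhdsWithin_of_tendsto_nhds <|
      ((continuous_const.add (continuous_const.mul continuous_id)).div_const _).tendsto' 0 _
        (by simp)
  refine tendsto_of_forall_eventually_squeeze (hlim (-1)) (hlim 1)
    (eventually_mem_nhdsWithin.mono fun ε (hε : 0 < ε) => ?_)
  refine ⟨_, _, tendsto_const_nhds, tendsto_const_nhds, ?_⟩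
  obtain ⟨N, hN⟩ := eventually_atTop.mp
    (hFc.eventually (Icc_mem_nhds (by linarith : c + -1 * ε < c) (by linarith : c < c + 1 * ε)))
  filter_upwards [eventually_gt_atTop (max N 0)] with t ht
  exact integral_Ioi_mul_rpow_mem_Icc hγ ((le_max_right _ _).trans_lt ht) hF
    fun s hs => hN s ((le_max_left _ _).trans (ht.trans hs).le)

section WeightedIntegrals

variable {Ω : Type*} [MeasurableSpace Ω] {μ : Measure Ω} {X w : Ω → ℝ} {q : ℝ → ℝ} {a η : ℝ}

lemma integral_comp_mul_le_setIntegral_add (hw : Integrable w μ) (hw0 : ∀ ω, 0 ≤ w ω)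
    (hX : Measurable X) (hqw : Integrable (fun ω => q (X ω) * w ω) μ) (hq1 : ∀ ω, q (X ω) ≤ 1)
    (hη : 0 ≤ η) (hqa : ∀ ω, X ω ≤ a → q (X ω) ≤ η) :
    ∫ ω, q (X ω) * w ω ∂μ ≤ ∫ ω in {ω | a < X ω}, w ω ∂μ + η * ∫ ω, w ω ∂μ := by
  have hs : MeasurableSet {ω | a < X ω} := measurableSet_lt measurable_const hX
  rw [← integral_indicator hs, ← integral_const_mul,
    ← integral_add (hw.indicator hs) (hw.const_mul η)]
  refine integral_mono hqw ((hw.indicator hs).add (hw.const_mul η)) fun ω => ?_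
  by_cases h : a < X ω
  · simp only [indicator_of_mem (show ω ∈ {ω | a < X ω} from h)]
    nlinarith [hw0 ω, hq1 ω]
  · simp only [indicator_of_notMem (show ω ∉ {ω | a < X ω} from h), zero_add]
    nlinarith [hw0 ω, hqa ω (not_lt.mp h)]

lemma mul_setIntegral_le_integral_comp_mul (hw : Integrable w μ) (hw0 : ∀ ω, 0 ≤ w ω)
    (hX : Measurable X) (hqw : Integrable (fun ω => q (X ω) * w ω) μ) (hq0 : ∀ ω, 0 ≤ q (X ω))
    (hqa : ∀ ω, a < X ω → 1 - η ≤ q (X ω)) :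
    (1 - η) * ∫ ω in {ω | a < X ω}, w ω ∂μ ≤ ∫ ω, q (X ω) * w ω ∂μ := by
  have hs : MeasurableSet {ω | a < X ω} := measurableSet_lt measurable_const hX
  rw [← integral_indicator hs, ← integral_const_mul]
  refine integral_mono ((hw.indicator hs).const_mul _) hqw fun ω => ?_
  by_cases h : a < X ω
  · simp only [indicator_of_mem (show ω ∈ {ω | a < X ω} from h)]
    nlinarith [hw0 ω, hqa ω h]
  · simp only [indicator_of_notMem (show ω ∉ {ω | a < X ω} from h), mul_zero]
    exact mul_nonneg (hq0 ω) (hw0 ω)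

end WeightedIntegrals

theorem hasSum_integral_of_nonneg {α ι : Type*} [MeasurableSpace α] {μ : Measure α} [Countable ι]
    {F : ι → α → ℝ} {f : α → ℝ} (hF : ∀ i, AEStronglyMeasurable (F i) μ)
    (hF0 : ∀ i, 0 ≤ᵐ[μ] F i) (hf : Integrable f μ) (h : ∀ᵐ a ∂μ, HasSum (fun i => F i a) (f a)) :
    HasSum (fun i => ∫ a, F i a ∂μ) (∫ a, f a ∂μ) := by
  refine hasSum_integral_of_dominated_convergence F hF (fun i => ?_)
    (h.mono fun a ha => ha.summable)
    (hf.congr (h.mono fun a ha => ha.tsum_eq.symm)) h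
  filter_upwards [hF0 i] with a ha
  rw [Real.norm_of_nonneg ha]

lemma measure_nat_le_eq_tsum {Ω : Type*} [MeasurableSpace Ω] {μ : Measure Ω} [IsFiniteMeasure μ]
    {Λ : Ω → ℕ} (h : ∑' k, μ {ω | Λ ω = k} = μ univ) (n : ℕ) :
    μ {ω | n ≤ Λ ω} = ∑' j, μ {ω | Λ ω = j + n} := by
  have hge : μ {ω | n ≤ Λ ω} ≤ ∑' j, μ {ω | Λ ω = j + n} := by
    refine (measure_mono fun ω (hω : n ≤ Λ ω) => ?_).trans (measure_iUnion_le _)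
    exact mem_iUnion.mpr ⟨Λ ω - n, show Λ ω = Λ ω - n + n by omega⟩
  have hlt : μ {ω | n ≤ Λ ω}ᶜ ≤ ∑ k ∈ range n, μ {ω | Λ ω = k} := by
    refine (measure_mono fun ω (hω : ¬ n ≤ Λ ω) => ?_).trans (measure_biUnion_finset_le _ _)
    exact mem_iUnion₂.mpr ⟨Λ ω, mem_range.mpr (by omega), rfl⟩
  have hsplit : ∑ k ∈ range n, μ {ω | Λ ω = k} + ∑' j, μ {ω | Λ ω = j + n} = μ univ :=
    (ENNReal.summable.sum_add_tsum_nat_add').trans h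
  have hfin : ∑ k ∈ range n, μ {ω | Λ ω = k} ≠ ⊤ :=
    (ENNReal.sum_lt_top.mpr fun k _ => measure_lt_top _ _).ne
  refine le_antisymm hge ((ENNReal.add_le_add_iff_left hfin).mp ?_)
  calc _ = μ univ := hsplit
    _ ≤ μ {ω | n ≤ Λ ω} + μ {ω | n ≤ Λ ω}ᶜ := measure_univ_le_add_compl _
    _ ≤ _ := by rw [add_comm]; gcongr

section MixedPoisson

variable {Ω : Type*} [MeasurableSpace Ω] {μ : Measure Ω} {Z : Ω → ℝ} {r : ℕ}

lemma integrable_poissonTail_mul_pow (hZ : Measurable Z) (hZ0 : ∀ ω, 0 ≤ Z ω)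
    (hInt : Integrable (fun ω => Z ω ^ r) μ) (n : ℕ) :
    Integrable (fun ω => poissonTail n (Z ω) * Z ω ^ r) μ := by
  refine hInt.bdd_mul ((measurable_poissonTail n).comp hZ).aestronglyMeasurable
    (c := 1) (ae_of_all _ fun ω => ?_)
  rw [Real.norm_of_nonneg (poissonTail_nonneg (hZ0 ω) n)]
  exact poissonTail_le_one (hZ0 ω) n

lemma hasSum_integral_poissonTail_mul_pow (hZ : Measurable Z) (hZ0 : ∀ ω, 0 ≤ Z ω)
    (hInt : Integrable (fun ω => Z ω ^ r) μ) (n : ℕ) :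
    HasSum (fun j : ℕ => ∫ ω, exp (-Z ω) * Z ω ^ (j + n + r) / (j + n)! ∂μ)
      (∫ ω, poissonTail n (Z ω) * Z ω ^ r ∂μ) := by
  refine hasSum_integral_of_nonneg (fun j => by fun_prop) (fun j => ae_of_all _ fun ω => ?_)
    (integrable_poissonTail_mul_pow hZ hZ0 hInt n) (ae_of_all _ fun ω => ?_)
  · have := hZ0 ω
    positivity
  · exact ((hasSum_poissonTail n (Z ω)).mul_right (Z ω ^ r)).congr_fun fun j => by
      rw [pow_add]
      ring

lemma integral_poissonTail_mul_pow_le (hZ : Measurable Z) (hZ0 : ∀ ω, 0 ≤ Z ω)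
    (hInt : Integrable (fun ω => Z ω ^ r) μ) {ε : ℝ} (hε0 : 0 < ε) (hε1 : ε < 1) :
    ∃ δ > 0, ∀ (t : ℝ) (n : ℕ), t ≤ n →
      ∫ ω, poissonTail n (Z ω) * Z ω ^ r ∂μ ≤
        ∫ ω in {ω | (1 - ε) * t < Z ω}, Z ω ^ r ∂μ + exp (-δ * t) * ∫ ω, Z ω ^ r ∂μ := by
  obtain ⟨δ, hδ, hbound⟩ := exists_poissonTail_le_exp_neg hε0 hε1
  refine ⟨δ, hδ, fun t n htn => ?_⟩
  exact integral_comp_mul_le_setIntegral_add hInt (fun ω => pow_nonneg (hZ0 ω) r) hZ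
    (integrable_poissonTail_mul_pow hZ hZ0 hInt n) (fun ω => poissonTail_le_one (hZ0 ω) n)
    (exp_nonneg _) fun ω h => hbound t (Z ω) n (hZ0 ω) h htn

lemma le_integral_poissonTail_mul_pow (hZ : Measurable Z) (hZ0 : ∀ ω, 0 ≤ Z ω)
    (hInt : Integrable (fun ω => Z ω ^ r) μ) {ε : ℝ} (hε : 0 < ε) :
    ∃ δ > 0, ∀ (t : ℝ) (n : ℕ), 0 ≤ t → (n : ℝ) ≤ t + 1 →
      (1 - (1 + ε) * exp (-δ * t)) * ∫ ω in {ω | (1 + ε) * t < Z ω}, Z ω ^ r ∂μ ≤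
        ∫ ω, poissonTail n (Z ω) * Z ω ^ r ∂μ := by
  obtain ⟨δ, hδ, hbound⟩ := exists_one_sub_poissonTail_le_exp_neg hε
  refine ⟨δ, hδ, fun t n ht hnt => ?_⟩
  refine mul_setIntegral_le_integral_comp_mul hInt (fun ω => pow_nonneg (hZ0 ω) r) hZ
    (integrable_poissonTail_mul_pow hZ hZ0 hInt n) (fun ω => poissonTail_nonneg (hZ0 ω) n)
    fun ω h => ?_
  linarith [hbound t (Z ω) n ht h.le hnt]

lemma measureReal_le_eq_integral_poissonTail {Ω' : Type*} [MeasurableSpace Ω'] {ν : Measure Ω'}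
    [IsProbabilityMeasure ν] (hZ : Measurable Z) (hZ0 : ∀ ω, 0 ≤ Z ω)
    (hInt : Integrable (fun ω => Z ω ^ r) μ) (hpos : 0 < ∫ ω, Z ω ^ r ∂μ) {Λ : Ω' → ℕ}
    (hΛ : ∀ k : ℕ, ν.real {ω' | Λ ω' = k} =
      (∫ ω, Z ω ^ r ∂μ)⁻¹ * ∫ ω, exp (-Z ω) * Z ω ^ (k + r) / (k ! : ℝ) ∂μ) (n : ℕ) :
    ν.real {ω' | n ≤ Λ ω'} = (∫ ω, Z ω ^ r ∂μ)⁻¹ * ∫ ω, poissonTail n (Z ω) * Z ω ^ r ∂μ := by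
  have hmass : ∀ n : ℕ, HasSum (fun j => ν.real {ω' | Λ ω' = j + n})
      ((∫ ω, Z ω ^ r ∂μ)⁻¹ * ∫ ω, poissonTail n (Z ω) * Z ω ^ r ∂μ) := fun n => by
    simpa only [hΛ] using (hasSum_integral_poissonTail_mul_pow hZ hZ0 hInt n).mul_left _
  have htotal : ∑' k, ν {ω' | Λ ω' = k} = ν univ := by
    have h0 := hmass 0
    simp only [add_zero, poissonTail_zero, one_mul, inv_mul_cancel₀ hpos.ne'] at h0
    rw [measure_univ, ← ENNReal.ofReal_one, ← h0.tsum_eq,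
      ENNReal.ofReal_tsum_of_nonneg (fun k => measureReal_nonneg) h0.summable]
    simp_rw [ofReal_measureReal (measure_ne_top ν _)]
  rw [measureReal_def, measure_nat_le_eq_tsum htotal,
    ENNReal.tsum_toReal_eq fun _ => measure_ne_top _ _]
  exact (hmass n).tsum_eq

theorem tendsto_integral_poissonTail_mul_pow (hZ : Measurable Z) (hZ0 : ∀ ω, 0 ≤ Z ω)
    (hInt : Integrable (fun ω => Z ω ^ r) μ) {β K : ℝ}
    (hS : Tendsto (fun t => (∫ ω in {ω | t < Z ω}, Z ω ^ r ∂μ) * t ^ β) atTop (𝓝 K)) :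
    Tendsto (fun t => (∫ ω, poissonTail (⌊t⌋₊ + 1) (Z ω) * Z ω ^ r ∂μ) * t ^ β) atTop (𝓝 K) := by
  set S := fun t => ∫ ω in {ω | t < Z ω}, Z ω ^ r ∂μ
  set h := ∫ ω, Z ω ^ r ∂μ
  have hdecay : ∀ δ > 0, Tendsto (fun t => exp (-δ * t) * t ^ β) atTop (𝓝 0) := fun δ hδ => by
    simpa only [mul_comm] using tendsto_rpow_mul_exp_neg_mul_atTop_nhds_zero β δ hδ
  have hlim : ∀ σ : ℝ, Tendsto (fun ε => K * (1 + σ * ε) ^ (-β)) (𝓝[>] 0) (𝓝 K) := fun σ => by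
    have hcont : ContinuousAt (fun ε : ℝ => K * (1 + σ * ε) ^ (-β)) 0 :=
      continuousAt_const.mul <|
        (continuousAt_const.add (continuousAt_const.mul continuousAt_id)).rpow_const
          (Or.inl (by simp))
    simpa using tendsto_nhdsWithin_of_tendsto_nhds hcont.tendsto
  refine tendsto_of_forall_eventually_squeeze (hlim 1) (hlim (-1)) ?_
  filter_upwards [Ioo_mem_nhdsGT one_pos] with ε ⟨hε0, hε1⟩
  obtain ⟨δ₁, hδ₁, hupper⟩ := integral_poissonTail_mul_pow_le (μ := μ) hZ hZ0 hInt hε0 hε1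
  obtain ⟨δ₂, hδ₂, hlower⟩ := le_integral_poissonTail_mul_pow (μ := μ) hZ hZ0 hInt hε0
  refine ⟨fun t => (1 - (1 + ε) * exp (-δ₂ * t)) * S ((1 + ε) * t) * t ^ β,
    fun t => (S ((1 - ε) * t) + exp (-δ₁ * t) * h) * t ^ β, ?_, ?_, ?_⟩
  · have hexp : Tendsto (fun t => exp (-δ₂ * t)) atTop (𝓝 0) :=
      tendsto_exp_atBot.comp (tendsto_id.const_mul_atTop_of_neg (neg_neg_of_pos hδ₂))
    simpa only [one_mul, mul_zero, sub_zero, mul_assoc] using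
      ((hexp.const_mul (1 + ε)).const_sub 1).mul (tendsto_comp_const_mul_mul_rpow hS (by linarith))
  · simpa only [neg_one_mul, ← sub_eq_add_neg, zero_mul, add_zero, add_mul, mul_right_comm _ h]
      using (tendsto_comp_const_mul_mul_rpow hS (by linarith)).add ((hdecay δ₁ hδ₁).mul_const h)
  · filter_upwards [eventually_gt_atTop 0] with t ht
    have htβ : 0 ≤ t ^ β := (rpow_pos_of_pos ht β).le
    have hfloor := Nat.lt_floor_add_one t
    have hfloor' := Nat.floor_le ht.le
    constructor
    · exact mul_le_mul_of_nonneg_right (hlower t _ ht.le (by push_cast; linarith)) htβ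
    · exact mul_le_mul_of_nonneg_right (hupper t _ (by push_cast; linarith)) htβ

end MixedPoisson

section TailMoment

variable {Ω : Type*} [MeasurableSpace Ω] {μ : Measure Ω} {Z : Ω → ℝ} {r : ℕ}

lemma setLIntegral_gt_rpow_eq (hZ : Measurable Z) (hZ0 : ∀ ω, 0 ≤ Z ω) {p t : ℝ} (hp : 0 < p)
    (ht : 0 < t) :
    ∫⁻ ω in {ω | t < Z ω}, ENNReal.ofReal (Z ω ^ p) ∂μ =
      μ {ω | t < Z ω} * ENNReal.ofReal (t ^ p) +
        ENNReal.ofReal p * ∫⁻ s in Ioi t, μ {ω | s < Z ω} * ENNReal.ofReal (s ^ (p - 1)) := by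
  have hrestrict : ∀ s, μ.restrict {ω | t < Z ω} {ω | s < Z ω} = μ {ω | max s t < Z ω} := by
    intro s
    rw [Measure.restrict_apply (measurableSet_lt measurable_const hZ)]
    congr 1
    ext ω
    simp [and_comm]
  have hhead : ∫⁻ s in Ioc 0 t, ENNReal.ofReal (s ^ (p - 1)) = ENNReal.ofReal (t ^ p / p) := by
    rw [← ofReal_integral_eq_lintegral_ofReal, ← intervalIntegral.integral_of_le ht.le,
      integral_rpow (Or.inl (by linarith)), sub_add_cancel, zero_rpow hp.ne', sub_zero]
    · exact (intervalIntegrable_iff_integrableOn_Ioc_of_le ht.le).mp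
        (intervalIntegral.intervalIntegrable_rpow' (by linarith))
    · exact (ae_restrict_iff' measurableSet_Ioc).mpr
        (ae_of_all _ fun s hs => rpow_nonneg hs.1.le _)
  rw [lintegral_rpow_eq_lintegral_meas_lt_mul _ (ae_of_all _ hZ0) hZ.aemeasurable hp,
    ← Ioc_union_Ioi_eq_Ioi ht.le, lintegral_union measurableSet_Ioi Ioc_disjoint_Ioi_same,
    mul_add]
  simp_rw [hrestrict]
  rw [setLIntegral_congr_fun measurableSet_Ioc fun s hs => by rw [max_eq_right hs.2],
    setLIntegral_congr_fun measurableSet_Ioi fun s (hs : t < s) => by rw [max_eq_left hs.le],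
    lintegral_const_mul _ (by fun_prop), hhead, mul_left_comm, ← ENNReal.ofReal_mul hp.le,
    mul_div_cancel₀ _ hp.ne']

lemma measurable_measureReal_lt [IsFiniteMeasure μ] :
    Measurable fun s : ℝ => μ.real {ω | s < Z ω} :=
  Antitone.measurable fun _ _ hst => measureReal_mono fun _ (h : _ < Z _) => hst.trans_lt h

lemma setIntegral_gt_pow_eq [IsFiniteMeasure μ] (hZ : Measurable Z) (hZ0 : ∀ ω, 0 ≤ Z ω)
    (hInt : Integrable (fun ω => Z ω ^ r) μ) {t : ℝ} (ht : 0 < t) :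
    ∫ ω in {ω | t < Z ω}, Z ω ^ r ∂μ = μ.real {ω | t < Z ω} * t ^ r +
      r * ∫ s in Ioi t, μ.real {ω | s < Z ω} * s ^ ((r : ℝ) - 1) := by
  rcases r.eq_zero_or_pos with rfl | hr
  · simp
  have key := setLIntegral_gt_rpow_eq (μ := μ) hZ hZ0 (p := r) (by exact_mod_cast hr) ht
  simp only [rpow_natCast] at key
  have hfin : ∫⁻ ω in {ω | t < Z ω}, ENNReal.ofReal (Z ω ^ r) ∂μ ≠ ⊤ :=
    hInt.integrableOn.lintegral_lt_top.ne
  rw [key] at hfin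
  obtain ⟨hfin₁, hfin₂⟩ := ENNReal.add_ne_top.mp hfin
  have hJ : ∫ s in Ioi t, μ.real {ω | s < Z ω} * s ^ ((r : ℝ) - 1) =
      (∫⁻ s in Ioi t, μ {ω | s < Z ω} * ENNReal.ofReal (s ^ ((r : ℝ) - 1))).toReal := by
    rw [integral_eq_lintegral_of_nonneg_ae ((ae_restrict_iff' measurableSet_Ioi).mpr
        (ae_of_all _ fun s hs => mul_nonneg measureReal_nonneg (rpow_nonneg (ht.trans hs).le _)))
      (measurable_measureReal_lt.mul (by fun_prop)).aestronglyMeasurable]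
    simp_rw [ENNReal.ofReal_mul measureReal_nonneg, ofReal_measureReal (measure_ne_top μ _)]
  rw [integral_eq_lintegral_of_nonneg_ae (ae_of_all _ fun ω => pow_nonneg (hZ0 ω) r)
      (by fun_prop), key, ENNReal.toReal_add hfin₁ hfin₂,
    ENNReal.toReal_mul, ENNReal.toReal_mul, hJ, ENNReal.toReal_ofReal (by positivity),
    ENNReal.toReal_ofReal (by positivity), measureReal_def]

theorem tendsto_setIntegral_pow_mul_rpow [IsFiniteMeasure μ] (hZ : Measurable Z)
    (hZ0 : ∀ ω, 0 ≤ Z ω) (hInt : Integrable (fun ω => Z ω ^ r) μ) {α c : ℝ} (hr : (r : ℝ) < α)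
    (hTail : Tendsto (fun t => μ.real {ω | t < Z ω} * t ^ α) atTop (𝓝 c)) :
    Tendsto (fun t => (∫ ω in {ω | t < Z ω}, Z ω ^ r ∂μ) * t ^ (α - r)) atTop
      (𝓝 (c * (α / (α - r)))) := by
  have hJ := tendsto_integral_Ioi_mul_rpow (γ := r - 1) (by linarith) measurable_measureReal_lt
    hTail
  rw [show α - (r - 1) - 1 = α - r by ring] at hJ
  have hlim := hTail.add (hJ.const_mul (r : ℝ))
  have hαr : α - r ≠ 0 := by linarith
  rw [show c + r * (c / (α - r)) = c * (α / (α - r)) by field_simp; ring] at hlim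
  refine hlim.congr' ?_
  filter_upwards [eventually_gt_atTop 0] with t ht
  rw [setIntegral_gt_pow_eq hZ hZ0 hInt ht, add_mul, mul_assoc _ ((t : ℝ) ^ r), ← rpow_natCast,
    ← rpow_add ht, add_sub_cancel]
  ring

end TailMoment

theorem statement4_general {Ω : Type*} [MeasureSpace Ω] [IsProbabilityMeasure (ℙ : Measure Ω)]
    {Ω' : Type*} [MeasureSpace Ω'] [IsProbabilityMeasure (ℙ : Measure Ω')]
    (α c : ℝ) (hc : 0 < c) (r : ℕ) (hr : (r : ℝ) < α)
    (Z : Ω → ℝ) (hZmeas : Measurable Z) (hZnn : ∀ ω, 0 ≤ Z ω)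
    (hTail : Tendsto (fun t : ℝ => (ℙ {ω | t < Z ω}).toReal * t ^ α) atTop (𝓝 c))
    (hInt : Integrable (fun ω => Z ω ^ r))
    (hpos : 0 < ∫ ω, Z ω ^ r)
    (Λ : Ω' → ℕ)
    (hΛ : ∀ k : ℕ, (ℙ {ω' | Λ ω' = k}).toReal =
      (∫ ω, Z ω ^ r)⁻¹ * ∫ ω, Real.exp (-Z ω) * Z ω ^ (k + r) / (k.factorial : ℝ)) :
    Tendsto (fun t : ℝ => (ℙ {ω' | t < (Λ ω' : ℝ)}).toReal /
        ((∫ ω, Z ω ^ r)⁻¹ * ∫ ω in {ω | t < Z ω}, Z ω ^ r))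
      atTop (𝓝 1) ∧
    Tendsto (fun t : ℝ => (ℙ {ω' | t < (Λ ω' : ℝ)}).toReal * t ^ (α - (r : ℝ)))
      atTop (𝓝 ((∫ ω, Z ω ^ r)⁻¹ * c * (α / (α - (r : ℝ))))) := by
  set h := ∫ ω, Z ω ^ r
  have hS := tendsto_setIntegral_pow_mul_rpow hZmeas hZnn hInt hr hTail
  have hΛtail : ∀ t : ℝ, 0 ≤ t → (ℙ {ω' | t < (Λ ω' : ℝ)}).toReal =
      h⁻¹ * ∫ ω, poissonTail (⌊t⌋₊ + 1) (Z ω) * Z ω ^ r := fun t ht => by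
    rw [← measureReal_le_eq_integral_poissonTail hZmeas hZnn hInt hpos hΛ, measureReal_def]
    simp_rw [Nat.add_one_le_iff, Nat.floor_lt ht]
  have hΛlim : Tendsto (fun t : ℝ => (ℙ {ω' | t < (Λ ω' : ℝ)}).toReal * t ^ (α - r)) atTop
      (𝓝 (h⁻¹ * (c * (α / (α - r))))) := by
    refine ((tendsto_integral_poissonTail_mul_pow hZmeas hZnn hInt hS).const_mul h⁻¹).congr' ?_
    filter_upwards [eventually_ge_atTop 0] with t ht
    rw [hΛtail t ht, mul_assoc]
  have hK : h⁻¹ * (c * (α / (α - r))) ≠ 0 := by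
    have : 0 < α - r := sub_pos.mpr hr
    have : 0 < α := (Nat.cast_nonneg r).trans_lt hr
    positivity
  refine ⟨?_, by simpa only [mul_assoc] using hΛlim⟩
  have hratio := hΛlim.div (hS.const_mul h⁻¹) hK
  rw [div_self hK] at hratio
  refine hratio.congr' ?_
  filter_upwards [eventually_gt_atTop 0] with t ht
  rw [Pi.div_apply, ← mul_assoc, mul_div_mul_right _ _ (rpow_pos_of_pos ht _).ne']

/-- second part of Lemma 3.  Let `α, c > 0`, let `r` be an
integer with `0 ≤ r < α`, let `Z ≥ 0` satisfy `P(Z > t) = (c + o(1)) t^{-α}`,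
and let `h_r = E Z^r ∈ (0, ∞)`.  If `Λ_Z^{(r)}` is integer valued with
`P(Λ_Z^{(r)} = k) = h_r⁻¹ E(e^{-Z} Z^{k+r}/k!)`, then
`P(Λ_Z^{(r)} > t) = (1 + o(1)) h_r⁻¹ E(Z^r 1_{Z > t})
                  = (1 + o(1)) h_r⁻¹ c (α/(α−r)) t^{r−α}` as `t → ∞`. -/
theorem statement4 {Ω : Type*} [MeasureSpace Ω] [IsProbabilityMeasure (ℙ : Measure Ω)]
    {Ω' : Type*} [MeasureSpace Ω'] [IsProbabilityMeasure (ℙ : Measure Ω')]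
    (α c : ℝ) (hα : 0 < α) (hc : 0 < c) (r : ℕ) (hr : (r : ℝ) < α)
    (Z : Ω → ℝ) (hZmeas : Measurable Z) (hZnn : ∀ ω, 0 ≤ Z ω)
    (hTail : Tendsto (fun t : ℝ => (ℙ {ω | t < Z ω}).toReal * t ^ α) atTop (𝓝 c))
    (hInt : Integrable (fun ω => Z ω ^ r))
    (hpos : 0 < ∫ ω, Z ω ^ r)
    (Λ : Ω' → ℕ)
    (hΛ : ∀ k : ℕ, (ℙ {ω' | Λ ω' = k}).toReal =
      (∫ ω, Z ω ^ r)⁻¹ * ∫ ω, Real.exp (-Z ω) * Z ω ^ (k + r) / (k.factorial : ℝ)) :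
    Tendsto (fun t : ℝ => (ℙ {ω' | t < (Λ ω' : ℝ)}).toReal /
        ((∫ ω, Z ω ^ r)⁻¹ * ∫ ω in {ω | t < Z ω}, Z ω ^ r))
      atTop (𝓝 1) ∧
    Tendsto (fun t : ℝ => (ℙ {ω' | t < (Λ ω' : ℝ)}).toReal * t ^ (α - (r : ℝ)))
      atTop (𝓝 ((∫ ω, Z ω ^ r)⁻¹ * c * (α / (α - (r : ℝ))))) :=
  statement4_general α c hc r hr Z hZmeas hZnn hTail hInt hpos Λ hΛ
end

section
/- Let β > 0 and let r ≥ 0 be an integer with b_r = E[Y_1^r] finite and positive, and 0 < a_1 < ∞, 0 < b_1 < ∞. Then for every integer s ≥ 0, E[ Y_1^r · P(d_* = s | Y_1) ] = b_r · P(d_*^{(r)} = s), where conditionally on Y_1 the count Λ_0 is Poisson with mean Y_1 β^{1/2} a_1 and is independent of the i.i.d. sequence (τ_j). -/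
open MeasureTheory ProbabilityTheory Filter Real Topology

noncomputable section

namespace RIG

/-- Poisson probability with mean `a`. -/
def pois (a : ℝ) (s : ℕ) : ℝ := Real.exp (-a) * a ^ s / (s.factorial : ℝ)

/-- `r`-th moment of a distribution on ℝ (so `mom PX r = a_r`, `mom PY r = b_r`). -/
def mom (P : Measure ℝ) (r : ℕ) : ℝ := ∫ x, x ^ r ∂P

/-- λ₁(x) = x β^{-1/2} b₁ : the (conditional) Poisson mean attached to an attribute
of weight `x`. -/
def lamX (PY : Measure ℝ) (β x : ℝ) : ℝ := x * (Real.sqrt β)⁻¹ * mom PY 1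

/-- λ₀(y) = y β^{1/2} a₁ : the (conditional) Poisson mean attached to a vertex
of weight `y`. -/
def lamY (PX : Measure ℝ) (β y : ℝ) : ℝ := y * Real.sqrt β * mom PX 1

/-- pmf of the size-biased mixed Poisson variable Λ₁^{(r)}:
`P(Λ₁^{(r)} = s) = (E λ₁^r)⁻¹ E (e^{-λ₁} λ₁^{s+r} / s!)`, where `λ₁ = X₁ β^{-1/2} b₁`. -/
def pLamX (PX PY : Measure ℝ) (β : ℝ) (r s : ℕ) : ℝ :=
  (∫ x, lamX PY β x ^ r ∂PX)⁻¹ *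
    ∫ x, Real.exp (-lamX PY β x) * lamX PY β x ^ (s + r) / (s.factorial : ℝ) ∂PX

/-- pmf of the size-biased mixed Poisson variable Λ₀^{(r)}:
`P(Λ₀^{(r)} = s) = (E λ₀^r)⁻¹ E (e^{-λ₀} λ₀^{s+r} / s!)`, where `λ₀ = Y₁ β^{1/2} a₁`. -/
def pLamY (PX PY : Measure ℝ) (β : ℝ) (r s : ℕ) : ℝ :=
  (∫ y, lamY PX β y ^ r ∂PY)⁻¹ *
    ∫ y, Real.exp (-lamY PX β y) * lamY PX β y ^ (s + r) / (s.factorial : ℝ) ∂PY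

/-- `E Λ₁`. -/
def eLamX (PX PY : Measure ℝ) (β : ℝ) : ℝ := ∑' s : ℕ, (s : ℝ) * pLamX PX PY β 0 s

/-- pmf of τ: `P(τ = s) = ((s+1)/E Λ₁) P(Λ₁ = s+1)`. -/
def pTau (PX PY : Measure ℝ) (β : ℝ) (s : ℕ) : ℝ :=
  (((s : ℝ) + 1) / eLamX PX PY β) * pLamX PX PY β 0 (s + 1)

/-- pmf of `τ₁ + ⋯ + τ_i` for i.i.d. τⱼ (i-fold convolution of `pTau`). -/
def pTauConv (PX PY : Measure ℝ) (β : ℝ) : ℕ → ℕ → ℝ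
  | 0, s => if s = 0 then 1 else 0
  | i + 1, s =>
      ∑ j ∈ Finset.range (s + 1), pTauConv PX PY β i j * pTau PX PY β (s - j)

/-- pmf of the randomly stopped sum `d_*^{(r)} = Σ_{j=1}^{Λ₀^{(r)}} τ_j`
(with the τⱼ i.i.d. and independent of Λ₀^{(r)}). -/
def pDstar (PX PY : Measure ℝ) (β : ℝ) (r s : ℕ) : ℝ :=
  ∑' i : ℕ, pLamY PX PY β r i * pTauConv PX PY β i s

/-- pmf of `d_* = Σ_{j=1}^{Λ₀} τ_j` conditionally on `Y₁ = y`
(so that Λ₀ is Poisson with mean `λ₀(y)`, independent of the τⱼ). -/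
def pDstarCond (PX PY : Measure ℝ) (β y : ℝ) (s : ℕ) : ℝ :=
  ∑' i : ℕ, pois (lamY PX β y) i * pTauConv PX PY β i s

/-- pmf of `d_*^{(1)} + Λ₁^{(3)}` for independent summands. -/
def pSumA (PX PY : Measure ℝ) (β : ℝ) (s : ℕ) : ℝ :=
  ∑ p ∈ Finset.range (s + 1), pDstar PX PY β 1 p * pLamX PX PY β 3 (s - p)

/-- pmf of `d_*^{(2)} + Λ₁^{(2)} + Λ₂^{(2)}` for independent summands,
`Λ₂^{(2)}` being distributed as `Λ₁^{(2)}`. -/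
def pSumB (PX PY : Measure ℝ) (β : ℝ) (s : ℕ) : ℝ :=
  ∑ p ∈ Finset.range (s + 1), ∑ q ∈ Finset.range (s - p + 1),
    pDstar PX PY β 2 p * pLamX PX PY β 2 q * pLamX PX PY β 2 (s - p - q)

/-- Tail sum `Σ_{i ≥ k} f i` of a pmf `f`. -/
def tailSum (f : ℕ → ℝ) (k : ℕ) : ℝ := ∑' i : ℕ, f (k + i)

/-- `a(k) = a₃ b₁³ P(d_*^{(1)} + Λ₁^{(3)} = k - 2)`. -/
def aFun (PX PY : Measure ℝ) (β : ℝ) (k : ℕ) : ℝ :=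
  mom PX 3 * mom PY 1 ^ 3 * pSumA PX PY β (k - 2)

/-- `b(k) = a₂² b₁² b₂ P(d_*^{(2)} + Λ₁^{(2)} + Λ₂^{(2)} = k - 2)`. -/
def bFun (PX PY : Measure ℝ) (β : ℝ) (k : ℕ) : ℝ :=
  mom PX 2 ^ 2 * mom PY 1 ^ 2 * mom PY 2 * pSumB PX PY β (k - 2)

/-- `A(k) = a₃ b₁³ P(d_*^{(1)} + Λ₁^{(3)} ≥ k - 2)`. -/
def AFun (PX PY : Measure ℝ) (β : ℝ) (k : ℕ) : ℝ :=
  mom PX 3 * mom PY 1 ^ 3 * tailSum (pSumA PX PY β) (k - 2)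

/-- `B(k) = a₂² b₁² b₂ P(d_*^{(2)} + Λ₁^{(2)} + Λ₂^{(2)} ≥ k - 2)`. -/
def BFun (PX PY : Measure ℝ) (β : ℝ) (k : ℕ) : ℝ :=
  mom PX 2 ^ 2 * mom PY 1 ^ 2 * mom PY 2 * tailSum (pSumB PX PY β) (k - 2)

end RIG

/-!
Given `Y₁ = y`, `P(d_* = s | y) = Σᵢ pois(λ₀(y), i) P(τ₁ + ⋯ + τᵢ = s)`, and `λ₀(y) = c y` with
`c = β^{1/2} a₁`. Multiplying the `i`-th Poisson weight by `y^r = c^{-r} λ₀(y)^r` turns it into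
`c^{-r} e^{-λ₀} λ₀^{i+r} / i!`, whose `PY`-integral is `b_r P(Λ₀^{(r)} = i)`. What remains is to
exchange `∫` and `Σᵢ`, which is dominated convergence: the Poisson weights sum to one and the
convolution powers of the sub-probability `P(τ = ·)` lie in `[0, 1]`.
-/

namespace RIG

lemma pois_nonneg {a : ℝ} (ha : 0 ≤ a) (t : ℕ) : 0 ≤ pois a t := by
  unfold pois; positivity

lemma hasSum_pois {a : ℝ} (ha : 0 ≤ a) : HasSum (pois a) 1 := by
  lift a to NNReal using ha
  exact hasSum_one_poissonMeasure a

lemma continuous_pois (t : ℕ) : Continuous fun a : ℝ => pois a t := by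
  unfold pois; fun_prop

lemma summable_pois_mul {a : ℝ} (ha : 0 ≤ a) {c : ℕ → ℝ} (hc : ∀ i, |c i| ≤ 1) :
    Summable fun i => pois a i * c i :=
  (hasSum_pois ha).summable.of_norm_bounded fun i => by
    rw [norm_mul, Real.norm_of_nonneg (pois_nonneg ha i), Real.norm_eq_abs]
    exact mul_le_of_le_one_right (pois_nonneg ha i) (hc i)

section MixedPoisson

variable {α : Type*} [MeasurableSpace α] {μ : Measure α} {g lam : α → ℝ}

lemma hasSum_integral_mul_pois_mul (hg : Integrable g μ) (hg0 : ∀ᵐ y ∂μ, 0 ≤ g y)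
    (hlam : Measurable lam) (hlam0 : ∀ᵐ y ∂μ, 0 ≤ lam y) {c : ℕ → ℝ} (hc : ∀ i, |c i| ≤ 1) :
    HasSum (fun i => (∫ y, g y * pois (lam y) i ∂μ) * c i)
      (∫ y, g y * ∑' i, pois (lam y) i * c i ∂μ) := by
  have hbound_sum : ∀ᵐ y ∂μ, HasSum (fun i => g y * pois (lam y) i) (g y) := by
    filter_upwards [hlam0] with y hy
    simpa using (hasSum_pois hy).mul_left (g y)
  have hdom := hasSum_integral_of_dominated_convergence
    (F := fun i y => g y * (pois (lam y) i * c i)) (fun i y => g y * pois (lam y) i)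
    (fun i => hg.1.mul
      ((((continuous_pois i).measurable.comp hlam).mul_const (c i)).aestronglyMeasurable))
    (fun i => by
      filter_upwards [hg0, hlam0] with y hy hly
      rw [norm_mul, norm_mul, Real.norm_of_nonneg hy, Real.norm_of_nonneg (pois_nonneg hly i),
        Real.norm_eq_abs, ← mul_assoc]
      exact mul_le_of_le_one_right (mul_nonneg hy (pois_nonneg hly i)) (hc i))
    (hbound_sum.mono fun y hy => hy.summable)
    (hg.congr (hbound_sum.mono fun y hy => hy.tsum_eq.symm))
    (hlam0.mono fun y hy => ((summable_pois_mul hy hc).hasSum.mul_left (g y)))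
  simpa only [← mul_assoc, integral_mul_const] using hdom

end MixedPoisson

section SizeBias

variable {PX PY : Measure ℝ} {β : ℝ}

lemma integral_pow_mul_pois_lamY (hβ : 0 < β) (ha₁ : mom PX 1 ≠ 0) {r : ℕ}
    (hbr : mom PY r ≠ 0) (i : ℕ) :
    ∫ y, y ^ r * pois (lamY PX β y) i ∂PY = mom PY r * pLamY PX PY β r i := by
  set c := Real.sqrt β * mom PX 1
  have hc : c ≠ 0 := mul_ne_zero (Real.sqrt_pos.2 hβ).ne' ha₁
  have hlamY : ∀ y, lamY PX β y = y * c := fun y => mul_assoc _ _ _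
  have hnorm : ∫ y, lamY PX β y ^ r ∂PY = c ^ r * mom PY r := by
    simp_rw [hlamY, mul_pow, integral_mul_const, mom, mul_comm]
  have hbias : ∫ y, Real.exp (-lamY PX β y) * lamY PX β y ^ (i + r) / (i.factorial : ℝ) ∂PY
      = c ^ r * ∫ y, y ^ r * pois (lamY PX β y) i ∂PY := by
    rw [← integral_const_mul]
    refine integral_congr_ae (Eventually.of_forall fun y => ?_)
    simp only [hlamY, pois, pow_add, mul_pow]
    ring
  unfold pLamY
  rw [hnorm, hbias]
  field_simp

end SizeBias

lemma sum_range_sizeBias_le_one {u : ℕ → ℝ} (hu : ∀ t, 0 ≤ u t) (n : ℕ) :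
    ∑ k ∈ Finset.range n, ((k : ℝ) + 1) / (∑' t : ℕ, (t : ℝ) * u t) * u (k + 1) ≤ 1 := by
  have htu (t : ℕ) : 0 ≤ (t : ℝ) * u t := mul_nonneg t.cast_nonneg (hu t)
  by_cases hs : Summable fun t : ℕ => (t : ℝ) * u t
  · have hpartial :
        ∑ k ∈ Finset.range n, ((k : ℝ) + 1) * u (k + 1) ≤ ∑' t : ℕ, (t : ℝ) * u t := by
      simpa [Finset.sum_range_succ'] using
        hs.sum_le_tsum (Finset.range (n + 1)) fun t _ => htu t
    calc ∑ k ∈ Finset.range n, ((k : ℝ) + 1) / (∑' t : ℕ, (t : ℝ) * u t) * u (k + 1)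
        = (∑ k ∈ Finset.range n, ((k : ℝ) + 1) * u (k + 1)) / ∑' t : ℕ, (t : ℝ) * u t := by
          rw [Finset.sum_div]
          exact Finset.sum_congr rfl fun k _ => by ring
      _ ≤ 1 := div_le_one_of_le₀ hpartial (tsum_nonneg htu)
  · -- an infinite mean makes the `tsum` the junk value `0`, and then every term is `0`
    simp [tsum_eq_zero_of_not_summable hs]

section Tau

variable {PX PY : Measure ℝ} {β : ℝ}

lemma pLamX_nonneg (h : ∀ᵐ x ∂PX, 0 ≤ lamX PY β x) (r t : ℕ) : 0 ≤ pLamX PX PY β r t := by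
  unfold pLamX
  refine mul_nonneg (inv_nonneg.2 (integral_nonneg_of_ae ?_)) (integral_nonneg_of_ae ?_) <;>
    filter_upwards [h] with x hx <;> positivity

lemma pTau_nonneg (h : ∀ᵐ x ∂PX, 0 ≤ lamX PY β x) (t : ℕ) : 0 ≤ pTau PX PY β t :=
  mul_nonneg (div_nonneg (by positivity)
    (tsum_nonneg fun t => mul_nonneg t.cast_nonneg (pLamX_nonneg h 0 t))) (pLamX_nonneg h 0 _)

lemma sum_range_pTau_le_one (h : ∀ᵐ x ∂PX, 0 ≤ lamX PY β x) (n : ℕ) :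
    ∑ k ∈ Finset.range n, pTau PX PY β k ≤ 1 :=
  sum_range_sizeBias_le_one (pLamX_nonneg h 0) n

lemma pTauConv_nonneg_and_le_one (h0 : ∀ t, 0 ≤ pTau PX PY β t)
    (h1 : ∀ n, ∑ k ∈ Finset.range n, pTau PX PY β k ≤ 1) (i t : ℕ) :
    0 ≤ pTauConv PX PY β i t ∧ pTauConv PX PY β i t ≤ 1 := by
  induction i generalizing t with
  | zero => unfold pTauConv; split <;> norm_num
  | succ i ih =>
    refine ⟨Finset.sum_nonneg fun j _ => mul_nonneg (ih j).1 (h0 _), ?_⟩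
    calc ∑ j ∈ Finset.range (t + 1), pTauConv PX PY β i j * pTau PX PY β (t - j)
        ≤ ∑ j ∈ Finset.range (t + 1), pTau PX PY β (t - j) :=
          Finset.sum_le_sum fun j _ => mul_le_of_le_one_left (h0 _) (ih j).2
      _ = ∑ j ∈ Finset.range (t + 1), pTau PX PY β j := by
          simpa using Finset.sum_range_reflect (pTau PX PY β) (t + 1)
      _ ≤ 1 := h1 (t + 1)

end Tau

end RIG

open RIG

theorem statement14_general
    (PX PY : Measure ℝ)
    (hXnn : PX {x | x < 0} = 0) (hYnn : PY {y | y < 0} = 0)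
    (β : ℝ) (hβ : 0 < β) (r : ℕ)
    (hbr : Integrable (fun y : ℝ => y ^ r) PY) (hbrpos : 0 < mom PY r)
    (ha1pos : 0 < mom PX 1)
    (hb1pos : 0 < mom PY 1)
    (s : ℕ) :
    ∫ y, y ^ r * pDstarCond PX PY β y s ∂PY = mom PY r * pDstar PX PY β r s := by
  have hX : ∀ᵐ x ∂PX, 0 ≤ x := by rw [ae_iff]; simpa [not_le] using hXnn
  have hY : ∀ᵐ y ∂PY, 0 ≤ y := by rw [ae_iff]; simpa [not_le] using hYnn
  have hlamX : ∀ᵐ x ∂PX, 0 ≤ lamX PY β x := hX.mono fun x hx => by unfold lamX; positivity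
  have hconv (i : ℕ) : |pTauConv PX PY β i s| ≤ 1 := by
    obtain ⟨h0, h1⟩ :=
      pTauConv_nonneg_and_le_one (pTau_nonneg hlamX) (sum_range_pTau_le_one hlamX) i s
    rwa [abs_of_nonneg h0]
  have hsum := hasSum_integral_mul_pois_mul (lam := lamY PX β) hbr
    (hY.mono fun y hy => pow_nonneg hy r) (by unfold lamY; fun_prop) (hY.mono fun y hy => by unfold lamY; positivity) hconv
  calc ∫ y, y ^ r * pDstarCond PX PY β y s ∂PY
      = ∑' i, (∫ y, y ^ r * pois (lamY PX β y) i ∂PY) * pTauConv PX PY β i s :=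
        hsum.tsum_eq.symm
    _ = mom PY r * pDstar PX PY β r s := by
        simp_rw [integral_pow_mul_pois_lamY hβ ha1pos.ne' hbrpos.ne', mul_assoc]
        exact tsum_mul_left

/-- the observation in Step 3 of the proof of Theorem 2:
`E(Y₁^r P(d_* = s | Y₁)) = b_r P(d_*^{(r)} = s)`, where conditionally on `Y₁`
the count `Λ₀` is Poisson with mean `Y₁ β^{1/2} a₁`, independent of the i.i.d.
sequence `(τ_j)`. -/
theorem statement14
    (PX PY : Measure ℝ) [IsProbabilityMeasure PX] [IsProbabilityMeasure PY]
    (hXnn : PX {x | x < 0} = 0) (hYnn : PY {y | y < 0} = 0)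
    (β : ℝ) (hβ : 0 < β) (r : ℕ)
    (hbr : Integrable (fun y : ℝ => y ^ r) PY) (hbrpos : 0 < mom PY r)
    (ha1 : Integrable (fun x : ℝ => x) PX) (ha1pos : 0 < mom PX 1)
    (hb1 : Integrable (fun y : ℝ => y) PY) (hb1pos : 0 < mom PY 1)
    (s : ℕ) :
    ∫ y, y ^ r * pDstarCond PX PY β y s ∂PY = mom PY r * pDstar PX PY β r s :=
  statement14_general PX PY hXnn hYnn β hβ r hbr hbrpos ha1pos hb1pos s
end
end
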